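/- Let β > 1, Z(a) = Σ_{n=0}^{∞} (n + a)^{−(1+β)} for real a ≥ 1, R₀⁺ ∈ ℝ, R₁⁺ > 0, and for k ≥ 2 let R_k⁺ = (1/k^{2+β}) · Z(1)/(Z(k)·Z(k+1)) · R₁⁺. Define the immediate impact 𝓘_t = R₀⁺ + R₁⁺ + Σ_{k=2}^{t−1} R_k⁺. Then lim_{t→∞} 𝓘_t / t^{β−1} = β²·Z(1)·R₁⁺ / (β − 1); in particular 𝓘_t grows like t^{β−1}. -/

import Mathlib

/-!
By the mean value theorem, `β (x+1)^{-(1+β)} ≤ x^{-β} - (x+1)^{-β} ≤ β x^{-(1+β)}`; summing this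
telescoping comparison gives `x^{-β}/β ≤ Z(x) ≤ x^{-β}/β + x^{-(1+β)}`, so `Z(x) ~ x^{-β}/β` and
`R_k⁺ ~ β² Z(1) R₁⁺ k^{β-2}`. Writing `t^{β-1}` as the telescoping sum of
`(k+1)^{β-1} - k^{β-1} ~ (β-1) k^{β-2}`, the Stolz–Cesàro theorem turns this into
`𝓘_t ~ β² Z(1) R₁⁺ t^{β-1} / (β-1)`.
-/

open Filter Finset Real Asymptotics Topology

theorem tendsto_sum_range_div_sum_range_of_tendsto_div {f g : ℕ → ℝ} {L : ℝ}
    (hg : ∀ k, 0 < g k) (hg_sum : Tendsto (fun n => ∑ k ∈ range n, g k) atTop atTop)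
    (hfg : Tendsto (fun k => f k / g k) atTop (𝓝 L)) :
    Tendsto (fun n => (∑ k ∈ range n, f k) / ∑ k ∈ range n, g k) atTop (𝓝 L) := by
  have hlittle : (fun k => f k - L * g k) =o[atTop] g := by
    rw [isLittleO_iff_tendsto fun k h => absurd h (hg k).ne']
    refine (by simpa using hfg.sub_const L : Tendsto (fun k => f k / g k - L) atTop (𝓝 0)).congr
      fun k => ?_
    field_simp [(hg k).ne']
  have hsum := (hlittle.sum_range (fun k => (hg k).le) hg_sum).tendsto_div_nhds_zero
  refine (zero_add L ▸ hsum.add_const L).congr' ?_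
  filter_upwards [hg_sum.eventually_gt_atTop 0] with n hn
  rw [sum_sub_distrib, ← mul_sum]
  field_simp
  ring

theorem tendsto_rpow_add_one_sub_rpow_div_rpow (γ : ℝ) :
    Tendsto (fun k : ℕ => (((k : ℝ) + 1) ^ γ - (k : ℝ) ^ γ) / (k : ℝ) ^ (γ - 1))
      atTop (𝓝 γ) := by
  have hd : Tendsto (slope (fun x : ℝ => x ^ γ) 1) (𝓝[≠] 1) (𝓝 γ) := by
    simpa [hasDerivAt_iff_tendsto_slope] using
      Real.hasDerivAt_rpow_const (x := 1) (p := γ) (Or.inl one_ne_zero)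
  have hu : Tendsto (fun k : ℕ => 1 + (k : ℝ)⁻¹) atTop (𝓝[≠] 1) := by
    refine tendsto_nhdsWithin_of_tendsto_nhds_of_eventually_within _ ?_ ?_
    · simpa using tendsto_inv_atTop_zero.comp tendsto_natCast_atTop_atTop |>.const_add (1 : ℝ)
    · filter_upwards [eventually_ne_atTop 0] with k hk
      simpa using hk
  refine (hd.comp hu).congr' ?_
  filter_upwards [eventually_ne_atTop 0] with k hk
  have hk0 : (0 : ℝ) < k := by positivity
  have hpow : (k : ℝ) ^ γ = (k : ℝ) ^ (γ - 1) * k := by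
    rw [← rpow_add_one hk0.ne', sub_add_cancel]
  rw [Function.comp_apply, slope_def_field, show 1 + (k : ℝ)⁻¹ = (k + 1) / k by field_simp,
    div_rpow (by positivity) hk0.le, one_rpow, hpow]
  field_simp
  ring

theorem sum_range_rpow_add_one_sub_rpow {γ : ℝ} (hγ : γ ≠ 0) (n : ℕ) :
    ∑ k ∈ range n, (((k : ℝ) + 1) ^ γ - (k : ℝ) ^ γ) = (n : ℝ) ^ γ := by
  simpa [zero_rpow hγ] using sum_range_sub (fun k : ℕ => (k : ℝ) ^ γ) n

theorem tendsto_sum_range_div_rpow {γ L : ℝ} (hγ : 0 < γ) {f : ℕ → ℝ}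
    (hf : Tendsto (fun k => f k / (k : ℝ) ^ (γ - 1)) atTop (𝓝 L)) :
    Tendsto (fun n => (∑ k ∈ range n, f k) / (n : ℝ) ^ γ) atTop (𝓝 (L / γ)) := by
  set g : ℕ → ℝ := fun k => ((k : ℝ) + 1) ^ γ - (k : ℝ) ^ γ
  have hg : ∀ k, 0 < g k := fun k =>
    sub_pos.mpr (rpow_lt_rpow (Nat.cast_nonneg k) (lt_add_one _) hγ)
  have hg_sum : ∀ n, ∑ k ∈ range n, g k = (n : ℝ) ^ γ := sum_range_rpow_add_one_sub_rpow hγ.ne'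
  have hfg : Tendsto (fun k => f k / g k) atTop (𝓝 (L / γ)) := by
    refine (hf.div (tendsto_rpow_add_one_sub_rpow_div_rpow γ) hγ.ne').congr' ?_
    filter_upwards [eventually_ne_atTop 0] with k hk
    exact div_div_div_cancel_right₀ (by positivity) _ _
  have hpow : Tendsto (fun n : ℕ => (n : ℝ) ^ γ) atTop atTop :=
    (tendsto_rpow_atTop hγ).comp tendsto_natCast_atTop_atTop
  simpa only [hg_sum] using
    tendsto_sum_range_div_sum_range_of_tendsto_div hg (by simpa only [hg_sum] using hpow) hfg

theorem rpow_neg_sub_rpow_neg_add_one_mem_Icc {β x : ℝ} (hβ : 0 < β) (hx : 0 < x) :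
    x ^ (-β) - (x + 1) ^ (-β) ∈ Set.Icc (β * (x + 1) ^ (-(1 + β))) (β * x ^ (-(1 + β))) := by
  have hderiv : ∀ t ∈ Set.Ioo x (x + 1),
      HasDerivAt (fun t : ℝ => t ^ (-β)) (-β * t ^ (-β - 1)) t := fun t ht =>
    hasDerivAt_rpow_const (Or.inl (hx.trans ht.1).ne')
  have hcont : ContinuousOn (fun t : ℝ => t ^ (-β)) (Set.Icc x (x + 1)) := fun t ht =>
    (continuousAt_rpow_const t (-β) (Or.inl (hx.trans_le ht.1).ne')).continuousWithinAt
  obtain ⟨c, hc, hslope⟩ := exists_hasDerivAt_eq_slope _ _ (lt_add_one x) hcont hderiv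
  have hc0 : 0 < c := hx.trans hc.1
  have hdiff : x ^ (-β) - (x + 1) ^ (-β) = β * c ^ (-(1 + β)) := by
    rw [add_sub_cancel_left, div_one] at hslope
    rw [show -(1 + β) = -β - 1 by ring]
    linarith
  rw [hdiff, show -(1 + β) = -β - 1 by ring]
  exact ⟨mul_le_mul_of_nonneg_left (rpow_le_rpow_of_nonpos hc0 hc.2.le (by linarith)) hβ.le,
    mul_le_mul_of_nonneg_left (rpow_le_rpow_of_nonpos hx hc.1.le (by linarith)) hβ.le⟩

theorem hasSum_rpow_neg_sub_rpow_neg_add_one {β x : ℝ} (hβ : 0 < β) (hx : 0 < x) :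
    HasSum (fun n : ℕ => ((n : ℝ) + x) ^ (-β) - ((n : ℝ) + x + 1) ^ (-β)) (x ^ (-β)) := by
  have hnonneg : ∀ n : ℕ, 0 ≤ ((n : ℝ) + x) ^ (-β) - ((n : ℝ) + x + 1) ^ (-β) := fun n =>
    sub_nonneg.mpr (rpow_le_rpow_of_nonpos (by positivity) (by linarith) (by linarith))
  have hpartial : ∀ n : ℕ, ∑ k ∈ range n, (((k : ℝ) + x) ^ (-β) - ((k : ℝ) + x + 1) ^ (-β))
      = x ^ (-β) - ((n : ℝ) + x) ^ (-β) := fun n => by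
    simpa [add_right_comm] using sum_range_sub' (fun k : ℕ => ((k : ℝ) + x) ^ (-β)) n
  have htail : Tendsto (fun n : ℕ => ((n : ℝ) + x) ^ (-β)) atTop (𝓝 0) :=
    (tendsto_rpow_neg_atTop hβ).comp (tendsto_atTop_add_const_right _ x tendsto_natCast_atTop_atTop)
  rw [hasSum_iff_tendsto_nat_of_nonneg hnonneg]
  simpa only [hpartial, sub_zero] using htail.const_sub (x ^ (-β))

theorem summable_nat_add_rpow_neg {s x : ℝ} (hs : 1 < s) (hx : 0 < x) :
    Summable (fun n : ℕ => ((n : ℝ) + x) ^ (-s)) := by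
  refine ((summable_one_div_nat_add_rpow x s).mpr hs).congr fun n => ?_
  rw [abs_of_pos (by positivity), rpow_neg (by positivity), one_div]

theorem rpow_neg_div_le_tsum_nat_add_rpow_neg {β x : ℝ} (hβ : 0 < β) (hx : 0 < x) :
    x ^ (-β) / β ≤ ∑' n : ℕ, ((n : ℝ) + x) ^ (-(1 + β)) := by
  refine hasSum_le (fun n => ?_) ((hasSum_rpow_neg_sub_rpow_neg_add_one hβ hx).div_const β)
    (summable_nat_add_rpow_neg (by linarith) hx).hasSum
  rw [div_le_iff₀' hβ]
  exact (rpow_neg_sub_rpow_neg_add_one_mem_Icc hβ (by positivity)).2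

theorem tsum_nat_add_rpow_neg_le {β x : ℝ} (hβ : 0 < β) (hx : 0 < x) :
    ∑' n : ℕ, ((n : ℝ) + x) ^ (-(1 + β)) ≤ x ^ (-β) / β + x ^ (-(1 + β)) := by
  have hs := summable_nat_add_rpow_neg (s := 1 + β) (by linarith) hx
  have htail : ∑' n : ℕ, ((n + 1 : ℕ) + x) ^ (-(1 + β)) ≤ x ^ (-β) / β := by
    refine hasSum_le (fun n => ?_) ((summable_nat_add_iff 1).mpr hs).hasSum
      ((hasSum_rpow_neg_sub_rpow_neg_add_one hβ hx).div_const β)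
    rw [le_div_iff₀' hβ, Nat.cast_succ, add_right_comm]
    exact (rpow_neg_sub_rpow_neg_add_one_mem_Icc hβ (by positivity)).1
  rw [hs.tsum_eq_zero_add, Nat.cast_zero, zero_add]
  linarith

theorem tendsto_rpow_mul_tsum_nat_add_rpow_neg {β : ℝ} (hβ : 0 < β) :
    Tendsto (fun x : ℝ => x ^ β * ∑' n : ℕ, ((n : ℝ) + x) ^ (-(1 + β))) atTop (𝓝 (1 / β)) := by
  have hupper : Tendsto (fun x : ℝ => 1 / β + x⁻¹) atTop (𝓝 (1 / β)) := by
    simpa using tendsto_inv_atTop_zero.const_add (1 / β)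
  refine tendsto_of_tendsto_of_tendsto_of_le_of_le' tendsto_const_nhds hupper ?_ ?_
  all_goals filter_upwards [eventually_gt_atTop 0] with x hx
  · calc 1 / β = x ^ β * (x ^ (-β) / β) := by
          rw [mul_div_assoc', ← rpow_add hx, add_neg_cancel, rpow_zero]
      _ ≤ _ := by gcongr; exact rpow_neg_div_le_tsum_nat_add_rpow_neg hβ hx
  · calc _ ≤ x ^ β * (x ^ (-β) / β + x ^ (-(1 + β))) := by
          gcongr; exact tsum_nat_add_rpow_neg_le hβ hx
      _ = 1 / β + x⁻¹ := by
          rw [mul_add, mul_div_assoc', ← rpow_add hx, ← rpow_add hx, add_neg_cancel, rpow_zero,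
            show β + -(1 + β) = -1 by ring, rpow_neg_one]

theorem tendsto_natCast_rpow_mul_comp_add_one {β L : ℝ} {f : ℝ → ℝ}
    (hf : Tendsto (fun x : ℝ => x ^ β * f x) atTop (𝓝 L)) :
    Tendsto (fun k : ℕ => (k : ℝ) ^ β * f (k + 1)) atTop (𝓝 L) := by
  have hratio : Tendsto (fun k : ℕ => ((k : ℝ) / (k + 1)) ^ β) atTop (𝓝 1) := by
    simpa [Function.comp_def] using ((continuousAt_rpow_const 1 β (Or.inl one_ne_zero)).tendsto.comp
      (tendsto_natCast_div_add_atTop (1 : ℝ)))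
  have hshift := hf.comp (tendsto_atTop_add_const_right _ 1 tendsto_natCast_atTop_atTop)
  refine (one_mul L ▸ hratio.mul hshift).congr fun k => ?_
  rw [Function.comp_apply, div_rpow (by positivity) (by positivity)]
  field_simp

theorem tendsto_div_rpow_mul_mul_comp_add_one {β : ℝ} (hβ : 0 < β) {Z : ℝ → ℝ}
    (hZ : Tendsto (fun x : ℝ => x ^ β * Z x) atTop (𝓝 (1 / β))) (c : ℝ) :
    Tendsto (fun k : ℕ => c / ((k : ℝ) ^ β * Z k * ((k : ℝ) ^ β * Z (k + 1)))) atTop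
      (𝓝 (β ^ 2 * c)) := by
  have hden := (hZ.comp tendsto_natCast_atTop_atTop).mul (tendsto_natCast_rpow_mul_comp_add_one hZ)
  have hlim := (tendsto_const_nhds (x := c)).div hden (by positivity)
  rwa [show c / (1 / β * (1 / β)) = β ^ 2 * c by field_simp] at hlim

theorem sum_Icc_two_sub_one_eq {M : Type*} [AddCommGroup M] (f : ℕ → M) {t : ℕ} (ht : 2 ≤ t) :
    ∑ k ∈ Icc 2 (t - 1), f k = ∑ k ∈ range t, f k - f 0 - f 1 := by
  rw [Icc_sub_one_right_eq_Ico_of_not_isMin (by rw [isMin_iff_eq_bot, Nat.bot_eq_zero]; omega),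
    sum_Ico_eq_sub _ ht]
  simp only [sum_range_succ, sum_range_zero, zero_add]
  abel

theorem stmt_14_general (β : ℝ) (hβ : 1 < β)
    (Z : ℝ → ℝ)
    (hZ : ∀ a : ℝ, 1 ≤ a → Z a = ∑' n : ℕ, ((n : ℝ) + a) ^ (-(1 + β)))
    (R₀ R₁ : ℝ) (Rp : ℕ → ℝ)
    (hRp : ∀ k : ℕ, 2 ≤ k →
      Rp k = (1 / (k : ℝ) ^ (2 + β)) * (Z 1 / (Z k * Z ((k : ℝ) + 1))) * R₁)
    (I : ℕ → ℝ)
    (hI : ∀ t : ℕ, I t = R₀ + R₁ + ∑ k ∈ Finset.Icc 2 (t - 1), Rp k) :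
    Filter.Tendsto (fun t : ℕ => I t / (t : ℝ) ^ (β - 1))
      Filter.atTop (nhds (β ^ 2 * Z 1 * R₁ / (β - 1))) := by
  have hβ0 : 0 < β := by linarith
  have hZ_asymp : Tendsto (fun x : ℝ => x ^ β * Z x) atTop (𝓝 (1 / β)) := by
    refine (tendsto_rpow_mul_tsum_nat_add_rpow_neg hβ0).congr' ?_
    filter_upwards [eventually_ge_atTop 1] with x hx
    rw [hZ x hx]
  have hRp_asymp : Tendsto (fun k : ℕ => Rp k / (k : ℝ) ^ (β - 1 - 1)) atTop
      (𝓝 (β ^ 2 * (Z 1 * R₁))) := by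
    refine (tendsto_div_rpow_mul_mul_comp_add_one hβ0 hZ_asymp (Z 1 * R₁)).congr' ?_
    filter_upwards [eventually_ge_atTop 2] with k hk
    have hk0 : (0 : ℝ) < k := by positivity
    have hpow : (k : ℝ) ^ (2 + β) * (k : ℝ) ^ (β - 1 - 1) = (k : ℝ) ^ β * (k : ℝ) ^ β := by
      rw [← rpow_add hk0, ← rpow_add hk0]
      ring_nf
    calc _ = Z 1 * R₁ / ((k : ℝ) ^ (2 + β) * (k : ℝ) ^ (β - 1 - 1) * (Z k * Z (k + 1))) := by
          rw [hpow]
          ring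
      _ = Rp k / (k : ℝ) ^ (β - 1 - 1) := by
          rw [hRp k hk]
          ring
  have hsum := tendsto_sum_range_div_rpow (sub_pos.mpr hβ) hRp_asymp
  rw [← mul_assoc] at hsum
  have hrest : Tendsto (fun t : ℕ => (R₀ + R₁ - Rp 0 - Rp 1) / (t : ℝ) ^ (β - 1)) atTop (𝓝 0) :=
    tendsto_const_nhds.div_atTop
      ((tendsto_rpow_atTop (sub_pos.mpr hβ)).comp tendsto_natCast_atTop_atTop)
  refine (zero_add (β ^ 2 * Z 1 * R₁ / (β - 1)) ▸ hrest.add hsum).congr' ?_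
  filter_upwards [eventually_ge_atTop 2] with t ht
  rw [hI, sum_Icc_two_sub_one_eq _ ht]
  ring

/-- For `β > 1`, the immediate impact
`𝓘_t = R₀⁺ + R₁⁺ + ∑_{k=2}^{t−1} R_k⁺` with
`R_k⁺ = (1/k^{2+β})·Z(1)/(Z(k)·Z(k+1))·R₁⁺` satisfies
`lim_{t→∞} 𝓘_t / t^{β−1} = β²·Z(1)·R₁⁺/(β − 1)`, i.e. `𝓘_t` grows like `t^{β−1}`. -/
theorem stmt_14 (β : ℝ) (hβ : 1 < β)
    (Z : ℝ → ℝ)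
    (hZ : ∀ a : ℝ, 1 ≤ a → Z a = ∑' n : ℕ, ((n : ℝ) + a) ^ (-(1 + β)))
    (R₀ R₁ : ℝ) (hR₁ : 0 < R₁) (Rp : ℕ → ℝ)
    (hRp : ∀ k : ℕ, 2 ≤ k →
      Rp k = (1 / (k : ℝ) ^ (2 + β)) * (Z 1 / (Z k * Z ((k : ℝ) + 1))) * R₁)
    (I : ℕ → ℝ)
    (hI : ∀ t : ℕ, I t = R₀ + R₁ + ∑ k ∈ Finset.Icc 2 (t - 1), Rp k) :
    Filter.Tendsto (fun t : ℕ => I t / (t : ℝ) ^ (β - 1))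
      Filter.atTop (nhds (β ^ 2 * Z 1 * R₁ / (β - 1))) :=
  stmt_14_general β hβ Z hZ R₀ R₁ Rp hRp I hI
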